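/- arXiv:1105.2944 — 3 statements merged into one kernel-verified Lean document; each statement's English description precedes it below -/
import Mathlib

section
/- Let λ be an uncountable cardinal and ⟨C_α : α < λ⁺⟩ a □_λ-sequence with otp(C_α) < λ for all α with cf(α) < λ. Let S ⊆ E^{λ⁺}_ω be a stationary set that reflects stationarily often, i.e., T := {α < λ⁺ : cf(α) > ω and S ∩ α is stationary in α} is stationary. For a club E ⊆ λ⁺ and limit α, define drop(α,E) := {sup(E ∩ β) : β ∈ C_α \ min(E)}. Then there exists a club D* ⊆ λ⁺ such that for every club D ⊆ λ⁺ there exists α ∈ S with drop(α,D*) ⊆ D and sup(acc(drop(α,D*))) = α. -/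
open Ordinal Set

noncomputable section

/-- The set of accumulation points of `C` that belong to `C`. -/
def acc (C : Set Ordinal) : Set Ordinal :=
  {β | β ∈ C ∧ ∀ γ < β, ∃ δ ∈ C, γ < δ ∧ δ < β}

/-- Non-accumulation points of `C`. -/
def nacc (C : Set Ordinal) : Set Ordinal := C \ acc C

/-- `X ∩ α` is cofinal in `α`. -/
def CofinalIn (X : Set Ordinal) (α : Ordinal) : Prop :=
  ∀ γ < α, ∃ δ ∈ X, γ < δ ∧ δ < α

/-- Accumulation points of `C` (not necessarily members of `C`). -/
def accPlus (C : Set Ordinal) : Set Ordinal :=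
  {β | (∃ δ ∈ C, δ < β) ∧ ∀ γ < β, ∃ δ ∈ C, γ < δ ∧ δ < β}

def IsClosedSet (C : Set Ordinal) : Prop := accPlus C ⊆ C

/-- `C` is a club (closed and unbounded) subset of `α`. -/
def IsClubIn (C : Set Ordinal) (α : Ordinal) : Prop :=
  C ⊆ Set.Iio α ∧ CofinalIn C α ∧ ∀ β < α, β ∈ accPlus C → β ∈ C

/-- The `i`-th element of the set of ordinals `C` (the inverse collapse of `C`). -/
def nth (C : Set Ordinal) (i : Ordinal) : Ordinal :=
  sInf (C \ Set.range (fun j : Set.Iio i => nth C j.1))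
termination_by i
decreasing_by exact j.2

/-- The order type of a set of ordinals: the least `i` such that the first `i`
elements of `C` exhaust `C`. -/
def otp (C : Set Ordinal) : Ordinal :=
  sInf {i | C ⊆ Set.range (fun j : Set.Iio i => nth C j.1)}

/-- The image of `E` under the order isomorphism (inverse collapse) `π_C : otp(C) → C`. -/
def collapseImage (C E : Set Ordinal) : Set Ordinal :=
  {β | β ∈ C ∧ otp (C ∩ Set.Iio β) ∈ E}

def IsStationaryIn (S : Set Ordinal) (α : Ordinal) : Prop :=
  ∀ D, IsClubIn D α → (S ∩ D).Nonempty

/-- A `□_λ`-sequence. -/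
def IsSquareSeq (lam : Cardinal) (C : Ordinal → Set Ordinal) : Prop :=
  ∀ α < (Order.succ lam).ord, Order.IsSuccLimit α →
    IsClubIn (C α) α ∧ otp (C α) ≤ lam.ord ∧
    ∀ β ∈ acc (C α), C β = C α ∩ Set.Iio β

/-- An Ostaszewski square (`⊠_λ`) sequence. -/
def IsOstSeq (lam : Cardinal) (C : Ordinal → Set Ordinal) : Prop :=
  IsSquareSeq lam C ∧
  ∀ A : Ordinal → Set Ordinal,
    (∀ i < lam.ord, CofinalIn (A i) (Order.succ lam).ord) →
    ∀ θ < lam.ord, Order.IsSuccLimit θ →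
    ∀ D, IsClubIn D (Order.succ lam).ord →
    ∃ α < (Order.succ lam).ord, otp (C α) = θ ∧
      ∀ i < θ, nth (C α) (i + 1) ∈ A i ∧
        ∃ β ∈ D, nth (C α) i < β ∧ β < nth (C α) (i + 1)

/-- `drop(α, E)` for the square sequence `C`. -/
def dropSet (C : Ordinal → Set Ordinal) (α : Ordinal) (E : Set Ordinal) : Set Ordinal :=
  (fun β => sSup (E ∩ Set.Iio β)) '' {β | β ∈ C α ∧ sInf E ≤ β}

/-!
Suppose not, and let `f E` be a club witnessing the failure for `E`. Let `μ ≤ λ` be a regular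
cardinal bounding `|C_α|` whenever `C_α ⊆ C_γ` for `α ∈ S` and `γ` in a stationary set `T` of
reflection points: `μ = λ` if `λ` is regular; otherwise every reflection point has cofinality
`< λ`, so `otp C_γ < λ`, and pressing down bounds `otp C_γ` on a stationary set.

Iterate `X ↦ Δ_c f (X \ (c + 1))` along a decreasing chain of clubs `⟨D_i : i ≤ μ⟩`.
Take `γ ∈ T ∩ acc D_μ` above `λ` many points of `D_μ`, and `α ∈ S ∩ acc C_γ` above them
which is a limit of `acc C_γ ∩ acc D_μ`, so that `C_α = C_γ ∩ α`. For `β ∈ C_α` the values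
`sup (D_i ∩ β)` decrease in `i`, hence stabilize, and since `|C_α| < cf μ` a single `b < μ`
stabilizes all of them; then `sup (D_b ∩ β)` lies in `D_{b+1}`, inside the diagonal
intersection for `D_b`. As `|C_α| < λ`, there is `c < α` whose successor in `D_b` is not in
`C_α`, and `E = D_b \ (c + 1)` satisfies `drop(α, E) ⊆ f E` while `acc C_α ∩ acc D_μ` makes
`acc (drop(α, E))` cofinal in `α`: a contradiction.
-/

universe u v w

open Cardinal

theorem accPlus_mono {A B : Set Ordinal} (h : A ⊆ B) : accPlus A ⊆ accPlus B := by
  rintro β ⟨⟨δ, hδ, hδβ⟩, hcof⟩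
  refine ⟨⟨δ, h hδ, hδβ⟩, fun γ hγ => ?_⟩
  obtain ⟨δ', hδ', hγδ', hδ'β⟩ := hcof γ hγ
  exact ⟨δ', h hδ', hγδ', hδ'β⟩

theorem accPlus_accPlus_subset (A : Set Ordinal) : accPlus (accPlus A) ⊆ accPlus A := by
  rintro β ⟨⟨δ, ⟨⟨ε, hε, hεδ⟩, -⟩, hδβ⟩, hcof⟩
  refine ⟨⟨ε, hε, hεδ.trans hδβ⟩, fun γ hγ => ?_⟩
  obtain ⟨δ', hδ', hγδ', hδ'β⟩ := hcof γ hγ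
  obtain ⟨ε', hε', hγε', hε'δ'⟩ := hδ'.2 γ hγδ'
  exact ⟨ε', hε', hγε', hε'δ'.trans hδ'β⟩

theorem mem_accPlus_inter_Ioi {X : Set Ordinal} {β c : Ordinal} (hβ : β ∈ accPlus X)
    (hc : c < β) : β ∈ accPlus (X ∩ Ioi c) := by
  refine ⟨?_, fun γ hγ => ?_⟩
  · obtain ⟨δ, hδ, hcδ, hδβ⟩ := hβ.2 c hc
    exact ⟨δ, ⟨hδ, hcδ⟩, hδβ⟩
  · obtain ⟨δ, hδ, hδ₁, hδβ⟩ := hβ.2 (max γ c) (max_lt hγ hc)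
    exact ⟨δ, ⟨hδ, (le_max_right γ c).trans_lt hδ₁⟩, (le_max_left γ c).trans_lt hδ₁, hδβ⟩

theorem mem_acc_inter_Iio {X : Set Ordinal} {β α : Ordinal} (hβ : β ∈ acc X) (hβα : β < α) :
    β ∈ acc (X ∩ Iio α) := by
  refine ⟨⟨hβ.1, hβα⟩, fun γ hγ => ?_⟩
  obtain ⟨δ, hδ, hγδ, hδβ⟩ := hβ.2 γ hγ
  exact ⟨δ, ⟨hδ, hδβ.trans hβα⟩, hγδ, hδβ⟩

theorem sSup_inter_Iio_of_mem_accPlus {X : Set Ordinal} {β : Ordinal} (hβ : β ∈ accPlus X) :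
    sSup (X ∩ Iio β) = β := by
  obtain ⟨δ, hδ, hδβ⟩ := hβ.1
  refine le_antisymm (csSup_le ⟨δ, hδ, hδβ⟩ fun x hx => hx.2.le) (le_of_forall_lt fun γ hγ => ?_)
  obtain ⟨δ', hδ', hγδ', hδ'β⟩ := hβ.2 γ hγ
  exact hγδ'.trans_le (le_csSup ⟨β, fun x hx => hx.2.le⟩ ⟨hδ', hδ'β⟩)

theorem sSup_inter_Ioi_inter_Iio {X : Set Ordinal} {c β : Ordinal}
    (hne : (X ∩ Ioi c ∩ Iio β).Nonempty) : sSup (X ∩ Ioi c ∩ Iio β) = sSup (X ∩ Iio β) := by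
  have hbdd : BddAbove (X ∩ Iio β) := ⟨β, fun x hx => hx.2.le⟩
  have hbdd' : BddAbove (X ∩ Ioi c ∩ Iio β) := ⟨β, fun x hx => hx.2.le⟩
  obtain ⟨w, ⟨hw, hcw⟩, hwβ⟩ := hne
  refine le_antisymm (csSup_le_csSup hbdd ⟨w, ⟨hw, hcw⟩, hwβ⟩ fun x hx => ⟨hx.1.1, hx.2⟩)
    (csSup_le ⟨w, hw, hwβ⟩ fun x hx => ?_)
  rcases lt_or_ge c x with hcx | hxc
  · exact le_csSup hbdd' ⟨⟨hx.1, hcx⟩, hx.2⟩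
  · exact (hxc.trans hcw.le).trans (le_csSup hbdd' ⟨⟨hw, hcw⟩, hwβ⟩)

theorem IsClubIn.sSup_inter_Iio_mem {D : Set Ordinal} {κ β : Ordinal} (hD : IsClubIn D κ)
    (hne : (D ∩ Iio β).Nonempty) (hβ : β < κ) : sSup (D ∩ Iio β) ∈ D := by
  have hbdd : BddAbove (D ∩ Iio β) := ⟨β, fun x hx => hx.2.le⟩
  have hle : sSup (D ∩ Iio β) ≤ β := csSup_le hne fun x hx => hx.2.le
  by_cases hmem : sSup (D ∩ Iio β) ∈ D ∩ Iio β
  · exact hmem.1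
  have hlt : ∀ x ∈ D ∩ Iio β, x < sSup (D ∩ Iio β) := fun x hx =>
    (le_csSup hbdd hx).lt_of_ne fun h => hmem (h ▸ hx)
  refine hD.2.2 _ (hle.trans_lt hβ) ⟨?_, fun γ hγ => ?_⟩
  · obtain ⟨x, hx⟩ := hne
    exact ⟨x, hx.1, hlt x hx⟩
  · obtain ⟨x, hx, hγx⟩ := exists_lt_of_lt_csSup hne hγ
    exact ⟨x, hx.1, hγx, hlt x hx⟩

theorem exists_lt_forall_le_of_lift_mk_lt_cof {ι : Type v} {κ : Ordinal.{u}} {f : ι → Ordinal.{u}}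
    (hι : Cardinal.lift.{u} #ι < Cardinal.lift.{v} κ.cof) (hf : ∀ i, f i < κ) :
    ∃ b < κ, ∀ i, f i ≤ b :=
  ⟨⨆ i, f i, Ordinal.lift_iSup_lt_of_lt_cof (by rwa [← Ordinal.lift_cof]) hf,
    le_ciSup ⟨κ, by rintro _ ⟨i, rfl⟩; exact (hf i).le⟩⟩

theorem exists_strictMono_nat_iSup_lt {κ x : Ordinal.{u}} (hκ : ℵ₀ < κ.cof)
    {R : Ordinal.{u} → Ordinal.{u} → Prop} (hR : ∀ y < κ, ∃ z < κ, y < z ∧ R y z) (hx : x < κ) :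
    ∃ e : ℕ → Ordinal.{u}, StrictMono e ∧ (∀ n, R (e n) (e (n + 1))) ∧
      x < ⨆ n, e n ∧ ⨆ n, e n < κ := by
  choose g hgκ hgR using hR
  let e : ℕ → Iio κ := fun n => Nat.rec ⟨x, hx⟩ (fun _ y => ⟨g y.1 y.2, hgκ y.1 y.2⟩) n
  have hmono : StrictMono fun n => (e n).1 := strictMono_nat_of_lt_succ fun n => (hgR _ _).1
  refine ⟨fun n => (e n).1, hmono, fun n => (hgR _ _).2,
    (hmono (Nat.lt_succ_self 0)).trans_le (Ordinal.le_iSup _ 1),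
    Ordinal.lift_iSup_lt_of_lt_cof ?_ fun n => (e n).2⟩
  simpa using hκ

theorem iSup_mem_accPlus {e : ℕ → Ordinal.{u}} {X : Set Ordinal.{u}} (he : StrictMono e)
    (hX : ∀ᶠ n in Filter.atTop, ∃ w ∈ X, e n < w ∧ w ≤ e (n + 1)) : ⨆ n, e n ∈ accPlus X := by
  have hlt : ∀ n, e n < ⨆ n, e n := fun n =>
    (he n.lt_succ_self).trans_le (Ordinal.le_iSup e (n + 1))
  obtain ⟨n₀, hn₀⟩ := Filter.eventually_atTop.mp hX
  refine ⟨?_, fun γ hγ => ?_⟩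
  · obtain ⟨w, hw, -, hwe⟩ := hn₀ n₀ le_rfl
    exact ⟨w, hw, hwe.trans_lt (hlt _)⟩
  · obtain ⟨n, hn⟩ := Ordinal.lt_iSup_iff.mp hγ
    obtain ⟨w, hw, hew, hwe⟩ := hn₀ (max n n₀) (le_max_right n n₀)
    exact ⟨w, hw, hn.trans ((he.monotone (le_max_left n n₀)).trans_lt hew), hwe.trans_lt (hlt _)⟩

theorem IsClubIn.inter_Ioi {D : Set Ordinal} {κ c : Ordinal} (hD : IsClubIn D κ) (hc : c < κ) :
    IsClubIn (D ∩ Ioi c) κ := by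
  refine ⟨fun x hx => hD.1 hx.1, fun γ hγ => ?_, fun β hβκ hβ => ?_⟩
  · obtain ⟨δ, hδ, hδ₁, hδκ⟩ := hD.2.1 (max γ c) (max_lt hγ hc)
    exact ⟨δ, ⟨hδ, (le_max_right γ c).trans_lt hδ₁⟩, (le_max_left γ c).trans_lt hδ₁, hδκ⟩
  · obtain ⟨δ, hδ, hδβ⟩ := hβ.1
    exact ⟨hD.2.2 β hβκ (accPlus_mono inter_subset_left hβ), hδ.2.trans hδβ⟩

theorem isClubIn_accPlus_inter_Iio {X : Set Ordinal} {γ : Ordinal} (hγ : ℵ₀ < γ.cof)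
    (hX : CofinalIn X γ) : IsClubIn (accPlus X ∩ Iio γ) γ := by
  refine ⟨inter_subset_right, fun x hx => ?_, fun β hβγ hβ =>
    ⟨accPlus_accPlus_subset X (accPlus_mono inter_subset_left hβ), hβγ⟩⟩
  obtain ⟨e, hmono, heX, hxe, heγ⟩ := exists_strictMono_nat_iSup_lt (R := fun _ z => z ∈ X) hγ
    (fun y hy => let ⟨z, hz, hyz, hzγ⟩ := hX y hy; ⟨z, hzγ, hyz, hz⟩) hx
  refine ⟨⨆ n, e n, ⟨iSup_mem_accPlus hmono (.of_forall fun n => ?_), heγ⟩, hxe, heγ⟩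
  exact ⟨_, heX n, hmono (Nat.lt_succ_self n), le_rfl⟩

theorem IsClubIn.iInter {ι : Type v} {κ : Ordinal.{u}} {A : ι → Set Ordinal.{u}}
    (hκ : ℵ₀ < κ.cof) (hι : Cardinal.lift.{u} #ι < Cardinal.lift.{v} κ.cof)
    (hA : ∀ i, IsClubIn (A i) κ) : IsClubIn (Iio κ ∩ ⋂ i, A i) κ := by
  have hκlim : Order.IsSuccLimit κ := Ordinal.one_lt_cof_iff.mp (one_lt_aleph0.trans hκ)
  refine ⟨inter_subset_left, fun x hx => ?_, fun β hβκ hβ => ⟨hβκ, mem_iInter.mpr fun i =>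
    (hA i).2.2 β hβκ (accPlus_mono (inter_subset_right.trans (iInter_subset _ i)) hβ)⟩⟩
  have step : ∀ y < κ, ∃ z < κ, y < z ∧ ∀ i, ∃ w ∈ A i, y < w ∧ w ≤ z := by
    intro y hy
    choose w hwA hyw hwκ using fun i => (hA i).2.1 y hy
    obtain ⟨b, hbκ, hb⟩ := exists_lt_forall_le_of_lift_mk_lt_cof hι hwκ
    exact ⟨max b (Order.succ y), max_lt hbκ (hκlim.succ_lt hy),
      (Order.lt_succ y).trans_le (le_max_right _ _),
      fun i => ⟨w i, hwA i, hyw i, (hb i).trans (le_max_left _ _)⟩⟩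
  obtain ⟨e, hmono, heA, hxe, heκ⟩ := exists_strictMono_nat_iSup_lt hκ step hx
  exact ⟨⨆ n, e n, ⟨heκ, mem_iInter.mpr fun i =>
    (hA i).2.2 _ heκ (iSup_mem_accPlus hmono (.of_forall fun n => heA n i))⟩, hxe, heκ⟩

theorem lift_mk_Iio_lt_lift_cof {y κ : Ordinal.{u}} (hy : y.card < κ.cof) :
    Cardinal.lift.{u} #(Iio y) < Cardinal.lift.{u + 1} κ.cof := by
  rwa [Cardinal.mk_Iio_ordinal, Cardinal.lift_lift, Cardinal.lift_lt]

theorem IsClubIn.inter {κ : Ordinal.{u}} {A B : Set Ordinal.{u}} (hκ : ℵ₀ < κ.cof)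
    (hA : IsClubIn A κ) (hB : IsClubIn B κ) : IsClubIn (A ∩ B) κ := by
  have h := IsClubIn.iInter (A := fun b : Bool => bif b then A else B) hκ
    (by simpa using (Cardinal.natCast_lt_aleph0 (n := 2)).trans hκ)
    (fun b => by cases b <;> assumption)
  rwa [← inter_eq_iInter, inter_eq_right.mpr (inter_subset_left.trans hA.1)] at h

def diagInter (κ : Ordinal) (A : Ordinal → Set Ordinal) : Set Ordinal :=
  {δ | δ < κ ∧ ∀ c < δ, δ ∈ A c}

theorem isClubIn_diagInter {κ : Ordinal.{u}} {A : Ordinal.{u} → Set Ordinal.{u}}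
    (hκ : ℵ₀ < κ.cof) (hcard : ∀ y < κ, y.card < κ.cof) (hA : ∀ c < κ, IsClubIn (A c) κ) :
    IsClubIn (diagInter κ A) κ := by
  refine ⟨fun δ hδ => hδ.1, fun x hx => ?_, fun β hβκ hβ => ⟨hβκ, fun c hc => ?_⟩⟩
  · have step : ∀ y < κ, ∃ z < κ, y < z ∧ ∀ c < y, z ∈ A c := by
      intro y hy
      have hB := IsClubIn.iInter (A := fun c : Iio y => A c) hκ
        (lift_mk_Iio_lt_lift_cof (hcard y hy)) fun c => hA c (c.2.trans hy)
      obtain ⟨z, ⟨hzκ, hzA⟩, hyz, -⟩ := hB.2.1 y hy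
      exact ⟨z, hzκ, hyz, fun c hc => mem_iInter.mp hzA ⟨c, hc⟩⟩
    obtain ⟨e, hmono, heA, hxe, heκ⟩ := exists_strictMono_nat_iSup_lt hκ step hx
    refine ⟨⨆ n, e n, ⟨heκ, fun c hc => (hA c (hc.trans heκ)).2.2 _ heκ ?_⟩, hxe, heκ⟩
    obtain ⟨n₀, hn₀⟩ := Ordinal.lt_iSup_iff.mp hc
    refine iSup_mem_accPlus hmono (Filter.eventually_atTop.mpr ⟨n₀, fun n hn => ?_⟩)
    exact ⟨e (n + 1), heA n c (hn₀.trans_le (hmono.monotone hn)), hmono (Nat.lt_succ_self n),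
      le_rfl⟩
  · refine (hA c (hc.trans hβκ)).2.2 β hβκ (accPlus_mono ?_ (mem_accPlus_inter_Ioi hβ hc))
    exact fun δ hδ => hδ.1.2 c hδ.2

def clubChain (F : Set Ordinal.{u} → Set Ordinal.{u}) (κ i : Ordinal.{u}) : Set Ordinal.{u} :=
  Iio κ ∩ ⋂ j : Iio i, F (clubChain F κ j)
termination_by i
decreasing_by exact j.2

section clubChain

variable {F : Set Ordinal.{u} → Set Ordinal.{u}} {κ : Ordinal.{u}}

theorem clubChain_eq (i : Ordinal.{u}) :
    clubChain F κ i = Iio κ ∩ ⋂ j : Iio i, F (clubChain F κ j) := by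
  rw [clubChain]

theorem clubChain_antitone : Antitone (clubChain F κ) := by
  intro i i' h
  rw [clubChain_eq i, clubChain_eq i']
  exact inter_subset_inter_right _ fun _ hx =>
    mem_iInter.mpr fun j => mem_iInter.mp hx ⟨j, j.2.trans_le h⟩

theorem clubChain_subset {i j : Ordinal.{u}} (hj : j < i) :
    clubChain F κ i ⊆ F (clubChain F κ j) :=
  fun _ hx => mem_iInter.mp ((clubChain_eq i ▸ hx).2) ⟨j, hj⟩

theorem isClubIn_clubChain (hκ : ℵ₀ < κ.cof) (hF : ∀ X, IsClubIn X κ → IsClubIn (F X) κ)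
    {i : Ordinal.{u}} (hi : i.card < κ.cof) : IsClubIn (clubChain F κ i) κ := by
  induction i using WellFoundedLT.induction with
  | _ i ih =>
    rw [clubChain_eq]
    exact IsClubIn.iInter hκ (lift_mk_Iio_lt_lift_cof hi) fun j =>
      hF _ (ih j j.2 ((Ordinal.card_le_card j.2.le).trans_lt hi))

end clubChain

theorem exists_lt_forall_eq_of_antitone {ι : Type v} {θ : Ordinal.{u}} (hθ : 0 < θ)
    (hι : Cardinal.lift.{u} #ι < Cardinal.lift.{v} θ.cof) {g : ι → Ordinal.{u} → Ordinal.{w}}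
    (hg : ∀ k, Antitone (g k)) : ∃ b < θ, ∀ k j, b ≤ j → j < θ → g k j = g k b := by
  have hmin : ∀ k, ∃ i < θ, g k i = sInf (g k '' Iio θ) := fun k =>
    csInf_mem (Set.Nonempty.image _ ⟨0, hθ⟩)
  choose i hiθ hi using hmin
  obtain ⟨b, hbθ, hb⟩ := exists_lt_forall_le_of_lift_mk_lt_cof hι hiθ
  refine ⟨b, hbθ, fun k j hbj hjθ => le_antisymm (hg k hbj) ?_⟩
  calc g k b ≤ g k (i k) := hg k (hb k)
    _ = sInf (g k '' Iio θ) := hi k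
    _ ≤ g k j := csInf_le' ⟨j, hjθ, rfl⟩

theorem exists_sInf_inter_Ioi_notMem {D Y X : Set Ordinal.{u}}
    (hD : ∀ d ∈ D, (D ∩ Ioi d).Nonempty) (hY : Y ⊆ D) (hX : #X < #Y) :
    ∃ y ∈ Y, sInf (D ∩ Ioi y) ∉ X := by
  by_contra! h
  have hmono : StrictMonoOn (fun d => sInf (D ∩ Ioi d)) D := fun d _ d' hd' hdd' =>
    (csInf_le' (show d' ∈ D ∩ Ioi d from ⟨hd', hdd'⟩)).trans_lt (csInf_mem (hD d' hd')).2
  have hinj : Function.Injective fun y : Y => (⟨sInf (D ∩ Ioi y), h y y.2⟩ : X) :=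
    fun y y' hyy' => Subtype.ext (hmono.injOn (hY y.2) (hY y'.2) (congrArg Subtype.val hyy'))
  exact (Cardinal.mk_le_of_injective hinj).not_gt hX

theorem exists_subset_inter_Iic_mk_eq {κ : Ordinal.{u}} {X : Set Ordinal.{u}}
    (hX : CofinalIn X κ) {ν : Cardinal.{u}} (hν : ν < κ.cof) :
    ∃ ξ < κ, ∃ Y ⊆ X ∩ Iic ξ, #Y = Cardinal.lift.{u + 1} ν := by
  have hbig : Cardinal.lift.{u + 1} ν ≤ #(X ∩ Iio κ : Set Ordinal.{u}) := by
    by_contra! hsmall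
    obtain ⟨b, hbκ, hb⟩ :=
      exists_lt_forall_le_of_lift_mk_lt_cof (f := fun x : (X ∩ Iio κ : Set _) => x.1)
      (by rw [Cardinal.lift_id'.{u, u + 1}]; exact hsmall.trans (Cardinal.lift_lt.mpr hν))
      fun x => x.2.2
    obtain ⟨δ, hδ, hbδ, hδκ⟩ := hX b hbκ
    exact (hb ⟨δ, hδ, hδκ⟩).not_gt hbδ
  obtain ⟨Y, hYX, hY⟩ := Cardinal.le_mk_iff_exists_subset.mp hbig
  obtain ⟨ξ, hξκ, hξ⟩ := exists_lt_forall_le_of_lift_mk_lt_cof (f := fun y : Y => y.1)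
    (by rw [Cardinal.lift_id'.{u, u + 1}, hY, Cardinal.lift_lt]; exact hν) fun y => (hYX y.2).2
  exact ⟨ξ, hξκ, Y, fun y hy => ⟨(hYX hy).1, hξ ⟨y, hy⟩⟩, hY⟩

section otp

variable {C : Set Ordinal.{u}}

theorem nth_eq (i : Ordinal.{u}) :
    nth C i = sInf (C \ range fun j : Iio i => nth C j.1) := by
  rw [nth]

theorem exists_subset_range_nth {o : Ordinal.{u}} (hC : C ⊆ Iio o) :
    ∃ i : Ordinal.{u}, C ⊆ range fun j : Iio i => nth C j.1 := by
  by_contra! h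
  have hmem : ∀ i : Ordinal.{u}, nth C i ∈ C \ range fun j : Iio i => nth C j.1 := fun i =>
    nth_eq i ▸ csInf_mem (sdiff_nonempty.mpr (h i))
  have hmono : StrictMono (nth C) := by
    intro i i' hii'
    refine lt_of_le_of_ne ?_ fun heq => (hmem i').2 ⟨⟨i, hii'⟩, heq⟩
    rw [nth_eq i]
    exact csInf_le' ⟨(hmem i').1, fun ⟨j, hj⟩ => (hmem i').2 ⟨⟨j, j.2.trans hii'⟩, hj⟩⟩
  exact (hmono.id_le o).not_gt (hC (hmem o).1)

theorem mk_le_lift_card_otp {o : Ordinal.{u}} (hC : C ⊆ Iio o) :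
    #C ≤ Cardinal.lift.{u + 1} (otp C : Ordinal.{u}).card :=
  calc #C ≤ #(range fun j : Iio (otp C : Ordinal.{u}) => nth C j.1) :=
        Cardinal.mk_le_mk_of_subset (csInf_mem (exists_subset_range_nth hC))
    _ ≤ #(Iio (otp C : Ordinal.{u})) := Cardinal.mk_range_le
    _ = _ := Cardinal.mk_Iio_ordinal _

end otp

theorem mem_acc_dropSet {C : Ordinal → Set Ordinal} {α β : Ordinal} {E : Set Ordinal}
    (hβC : β ∈ acc (C α)) (hβE : β ∈ accPlus E) : β ∈ acc (dropSet C α E) := by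
  obtain ⟨δ, hδ, hδβ⟩ := hβE.1
  refine ⟨⟨β, ⟨hβC.1, (csInf_le' hδ).trans hδβ.le⟩, sSup_inter_Iio_of_mem_accPlus hβE⟩,
    fun y hy => ?_⟩
  obtain ⟨p, hp, hyp, hpβ⟩ := hβE.2 y hy
  obtain ⟨β', hβ', hpβ', hβ'β⟩ := hβC.2 p hpβ
  have hp' : p ∈ E ∩ Iio β' := ⟨hp, hpβ'⟩
  exact ⟨sSup (E ∩ Iio β'), ⟨β', ⟨hβ', (csInf_le' hp).trans hpβ'.le⟩, rfl⟩,
    hyp.trans_le (le_csSup ⟨β', fun x hx => hx.2.le⟩ hp'),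
    (csSup_le ⟨p, hp'⟩ fun x hx => hx.2.le).trans_lt hβ'β⟩

theorem cofinalIn_acc_dropSet_inter_Ioi {C : Ordinal → Set Ordinal} {α c : Ordinal}
    {D : Set Ordinal} (h : CofinalIn (acc (C α) ∩ accPlus D) α) (hc : c < α) :
    CofinalIn (acc (dropSet C α (D ∩ Ioi c))) α := by
  intro y hy
  obtain ⟨β, ⟨hβC, hβD⟩, hyβ, hβα⟩ := h (max y c) (max_lt hy hc)
  exact ⟨β, mem_acc_dropSet hβC (mem_accPlus_inter_Ioi hβD ((le_max_right y c).trans_lt hyβ)),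
    (le_max_left y c).trans_lt hyβ, hβα⟩

theorem dropSet_inter_Ioi_subset {C : Ordinal → Set Ordinal} {α κ c : Ordinal}
    {D : Set Ordinal} {f : Set Ordinal → Set Ordinal} (hne : (D ∩ Ioi c).Nonempty)
    (hm : sInf (D ∩ Ioi c) ∉ C α)
    (hD : ∀ β ∈ C α, sInf (D ∩ Ioi c) < β →
      sSup (D ∩ Iio β) ∈ diagInter κ fun c => f (D ∩ Ioi c)) :
    dropSet C α (D ∩ Ioi c) ⊆ f (D ∩ Ioi c) := by
  rintro _ ⟨β, ⟨hβC, hmβ⟩, rfl⟩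
  have hmD := csInf_mem hne
  have hmβ' : sInf (D ∩ Ioi c) < β := hmβ.lt_of_ne fun h => hm (h ▸ hβC)
  dsimp only
  rw [sSup_inter_Ioi_inter_Iio ⟨_, hmD, hmβ'⟩]
  exact (hD β hβC hmβ').2 c (hmD.2.trans_le (le_csSup ⟨β, fun x hx => hx.2.le⟩ ⟨hmD.1, hmβ'⟩))

theorem exists_mem_acc_cofinalIn_acc_inter_accPlus {γ ξ : Ordinal} {S K P : Set Ordinal}
    (hγ : ℵ₀ < γ.cof) (hS : IsStationaryIn (S ∩ Iio γ) γ) (hK : IsClubIn K γ)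
    (hP : γ ∈ accPlus P) (hξ : ξ < γ) :
    ∃ α ∈ S, ξ < α ∧ α ∈ acc K ∧ CofinalIn (acc (K ∩ Iio α) ∩ accPlus P) α := by
  set H := (accPlus K ∩ Iio γ) ∩ (accPlus P ∩ Iio γ)
  have hH : IsClubIn H γ :=
    (isClubIn_accPlus_inter_Iio hγ hK.2.1).inter hγ (isClubIn_accPlus_inter_Iio hγ hP.2)
  obtain ⟨α, ⟨hαS, -⟩, ⟨hαH, hαγ⟩, hξα⟩ :=
    hS _ ((isClubIn_accPlus_inter_Iio hγ hH.2.1).inter_Ioi hξ)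
  have hacc : ∀ δ ∈ H, δ ∈ acc K := fun δ hδ => ⟨hK.2.2 δ hδ.1.2 hδ.1.1, hδ.1.1.2⟩
  refine ⟨α, hαS, hξα, hacc α (hH.2.2 α hαγ hαH), fun y hy => ?_⟩
  obtain ⟨δ, hδ, hyδ, hδα⟩ := hαH.2 y hy
  exact ⟨δ, ⟨mem_acc_inter_Iio (hacc δ hδ) hδα, hδ.2.1⟩, hyδ, hδα⟩

theorem IsStationaryIn.exists_inter {κ : Ordinal.{u}} {ι : Type v} {T : Set Ordinal.{u}}
    {A : ι → Set Ordinal.{u}} (hT : IsStationaryIn T κ) (hκ : ℵ₀ < κ.cof)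
    (hι : Cardinal.lift.{u} #ι < Cardinal.lift.{v} κ.cof) (hA : T ⊆ ⋃ i, A i) :
    ∃ i, IsStationaryIn (T ∩ A i) κ := by
  by_contra! h
  simp only [IsStationaryIn, not_forall, not_nonempty_iff_eq_empty] at h
  choose E hE hdisj using h
  obtain ⟨γ, hγT, -, hγE⟩ := hT _ (IsClubIn.iInter hκ hι hE)
  obtain ⟨i, hi⟩ := mem_iUnion.mp (hA hγT)
  exact (hdisj i).subset ⟨⟨hγT, hi⟩, mem_iInter.mp hγE i⟩

theorem cof_lt_of_not_isRegular {lam : Cardinal.{u}} (hreg : ¬ lam.IsRegular)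
    {γ : Ordinal.{u}} (hγ : γ < (Order.succ lam).ord) (hlim : Order.IsSuccLimit γ) :
    γ.cof < lam := by
  have hle : γ.cof ≤ lam :=
    (Ordinal.cof_le_card γ).trans (Order.lt_succ_iff.mp (Cardinal.lt_ord.mp hγ))
  exact hle.lt_of_ne fun h => hreg (h ▸ Cardinal.isRegular_cof hlim)

theorem exists_isRegular_isStationaryIn_mk_lt {lam : Cardinal.{u}} (hunc : ℵ₀ < lam)
    {C : Ordinal.{u} → Set Ordinal.{u}} (hC : IsSquareSeq lam C)
    (hotp : ∀ α < (Order.succ lam).ord, Order.IsSuccLimit α → α.cof < lam → otp (C α) < lam.ord)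
    {S T : Set Ordinal.{u}} (hS : S ⊆ {α | α < (Order.succ lam).ord ∧ α.cof = ℵ₀})
    (hT : IsStationaryIn T (Order.succ lam).ord)
    (hTlim : ∀ γ ∈ T, γ < (Order.succ lam).ord ∧ Order.IsSuccLimit γ) :
    ∃ μ : Cardinal.{u}, μ.IsRegular ∧ μ ≤ lam ∧ ∃ T' ⊆ T, IsStationaryIn T' (Order.succ lam).ord ∧
      ∀ γ ∈ T', ∀ α ∈ S, C α ⊆ C γ → #(C α) < Cardinal.lift.{u + 1} μ := by
  have hκ : ℵ₀ < (Order.succ lam).ord.cof := by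
    rw [(Cardinal.isRegular_succ hunc.le).cof_ord]; exact hunc.trans (Order.lt_succ lam)
  have hmk : ∀ γ, γ < (Order.succ lam).ord → Order.IsSuccLimit γ →
      #(C γ) ≤ Cardinal.lift.{u + 1} (otp (C γ) : Ordinal.{u}).card := fun γ hγ hlim =>
    mk_le_lift_card_otp (hC γ hγ hlim).1.1
  by_cases hreg : lam.IsRegular
  · refine ⟨lam, hreg, le_rfl, T, subset_rfl, hT, fun γ _ α hα _ => ?_⟩
    obtain ⟨hακ, hαcof⟩ := hS hα
    have hlim : Order.IsSuccLimit α := Ordinal.one_lt_cof_iff.mp (hαcof ▸ one_lt_aleph0)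
    refine (hmk α hακ hlim).trans_lt (Cardinal.lift_lt.mpr (Cardinal.lt_ord.mp ?_))
    exact hotp α hακ hlim (hαcof ▸ hunc)
  have hotpT : ∀ γ ∈ T, otp (C γ) < lam.ord := fun γ hγ =>
    let ⟨hγκ, hlim⟩ := hTlim γ hγ; hotp γ hγκ hlim (cof_lt_of_not_isRegular hreg hγκ hlim)
  obtain ⟨⟨ρ, hρ⟩, hρT⟩ := hT.exists_inter (A := fun ρ : Iio lam.ord => {γ | otp (C γ) ≤ ρ.1}) hκ
    (lift_mk_Iio_lt_lift_cof (by
      rw [Cardinal.card_ord, (Cardinal.isRegular_succ hunc.le).cof_ord]; exact Order.lt_succ lam))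
    fun γ hγ => mem_iUnion.mpr ⟨⟨_, hotpT γ hγ⟩, le_refl (otp (C γ) : Ordinal.{u})⟩
  refine ⟨Order.succ (ρ.card ⊔ ℵ₀), Cardinal.isRegular_succ le_sup_right,
    Order.succ_le_of_lt (max_lt (Cardinal.lt_ord.mp hρ) hunc), _, inter_subset_left, hρT,
    fun γ hγ α _ hαγ => ?_⟩
  obtain ⟨hγκ, hlim⟩ := hTlim γ hγ.1
  calc #(C α) ≤ #(C γ) := Cardinal.mk_le_mk_of_subset hαγ
    _ ≤ Cardinal.lift.{u + 1} (otp (C γ) : Ordinal.{u}).card := hmk γ hγκ hlim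
    _ ≤ Cardinal.lift.{u + 1} ρ.card := Cardinal.lift_le.mpr (Ordinal.card_le_card hγ.2)
    _ < Cardinal.lift.{u + 1} (Order.succ (ρ.card ⊔ ℵ₀)) :=
      Cardinal.lift_lt.mpr (Order.lt_succ_of_le le_sup_left)

theorem exists_isClubIn_dropSet_subset_of_antitone {κ θ α : Ordinal.{u}}
    {C : Ordinal.{u} → Set Ordinal.{u}} {f : Set Ordinal.{u} → Set Ordinal.{u}}
    {D : Ordinal.{u} → Set Ordinal.{u}} {Y : Set Ordinal.{u}} (hθ : Order.IsSuccLimit θ)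
    (hD : ∀ i ≤ θ, IsClubIn (D i) κ) (hanti : Antitone D)
    (hsucc : ∀ i, D (Order.succ i) ⊆ diagInter κ fun c => f (D i ∩ Ioi c))
    (hακ : α < κ) (hCα : C α ⊆ Iio α) (hCθ : #(C α) < Cardinal.lift.{u + 1} θ.cof)
    (hY : Y ⊆ D θ ∩ Ioi (sInf (D θ)) ∩ Iio α) (hCY : #(C α) < #Y)
    (hcof : CofinalIn (acc (C α) ∩ accPlus (D θ)) α) :
    ∃ E, IsClubIn E κ ∧ dropSet C α E ⊆ f E ∧ CofinalIn (acc (dropSet C α E)) α := by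
  obtain ⟨b, hbθ, hb⟩ := exists_lt_forall_eq_of_antitone (ι := C α) hθ.pos
    (by rwa [Cardinal.lift_id'.{u, u + 1}])
    (g := fun β i => sSup (D i ∩ Iio β.1)) fun β i j hij =>
      csSup_le_csSup' ⟨β, fun x hx => hx.2.le⟩ (inter_subset_inter_left _ (hanti hij))
  have hDb := hD b hbθ.le
  obtain ⟨c, hcY, hc⟩ := exists_sInf_inter_Ioi_notMem (D := D b) (X := C α)
    (fun d hd => let ⟨δ, hδ, hdδ, _⟩ := hDb.2.1 d (hDb.1 hd); ⟨δ, hδ, hdδ⟩)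
    (fun y hy => hanti hbθ.le (hY hy).1.1) hCY
  have hcα : c < α := (hY hcY).2
  have hne : (D b ∩ Ioi c).Nonempty :=
    let ⟨δ, hδ, hcδ, _⟩ := hDb.2.1 c (hcα.trans hακ); ⟨δ, hδ, hcδ⟩
  refine ⟨D b ∩ Ioi c, hDb.inter_Ioi (hcα.trans hακ), ?_,
    cofinalIn_acc_dropSet_inter_Ioi (fun y hy => ?_) hcα⟩
  · refine dropSet_inter_Ioi_subset (κ := κ) hne hc fun β hβ hmβ => ?_
    have hbθ' : Order.succ b < θ := hθ.succ_lt hbθ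
    rw [← hb ⟨β, hβ⟩ _ (Order.le_succ b) hbθ']
    exact hsucc b ((hD _ hbθ'.le).sSup_inter_Iio_mem
      ⟨_, hanti hbθ'.le (csInf_mem ⟨_, (hY hcY).1.1⟩),
        (hY hcY).1.2.trans ((csInf_mem hne).2.trans hmβ)⟩ ((hCα hβ).trans hακ))
  · obtain ⟨β, ⟨hβC, hβP⟩, hyβ, hβα⟩ := hcof y hy
    exact ⟨β, ⟨hβC, accPlus_mono (hanti hbθ.le) hβP⟩, hyβ, hβα⟩

theorem exists_isClubIn_dropSet_subset {lam : Cardinal.{u}} (hunc : ℵ₀ < lam)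
    {C : Ordinal.{u} → Set Ordinal.{u}} (hC : IsSquareSeq lam C) {S T : Set Ordinal.{u}}
    {μ : Cardinal.{u}} (hμ : μ.IsRegular) (hμlam : μ ≤ lam)
    (hT : IsStationaryIn T (Order.succ lam).ord)
    (hTrefl : ∀ γ ∈ T, γ < (Order.succ lam).ord ∧ ℵ₀ < γ.cof ∧ IsStationaryIn (S ∩ Iio γ) γ)
    (hsmall : ∀ γ ∈ T, ∀ α ∈ S, C α ⊆ C γ → #(C α) < Cardinal.lift.{u + 1} μ)
    {f : Set Ordinal.{u} → Set Ordinal.{u}}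
    (hf : ∀ E, IsClubIn E (Order.succ lam).ord → IsClubIn (f E) (Order.succ lam).ord) :
    ∃ E, IsClubIn E (Order.succ lam).ord ∧
      ∃ α ∈ S, dropSet C α E ⊆ f E ∧ CofinalIn (acc (dropSet C α E)) α := by
  set κ := (Order.succ lam).ord
  have hκcof : κ.cof = Order.succ lam := (Cardinal.isRegular_succ hunc.le).cof_ord
  have hκ : ℵ₀ < κ.cof := hκcof ▸ hunc.trans (Order.lt_succ lam)
  have hcard : ∀ y < κ, y.card < κ.cof := fun y hy => hκcof ▸ Cardinal.lt_ord.mp hy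
  set D := clubChain (fun X => diagInter κ fun c => f (X ∩ Ioi c)) κ
  have hD : ∀ i ≤ μ.ord, IsClubIn (D i) κ := fun i hi =>
    isClubIn_clubChain hκ
      (fun X hX => isClubIn_diagInter hκ hcard fun c hc => hf _ (hX.inter_Ioi hc))
      ((Ordinal.card_le_card hi).trans_lt
        (by rw [Cardinal.card_ord, hκcof]; exact Order.lt_succ_of_le hμlam))
  have hP := hD μ.ord le_rfl
  have hp₀ : sInf (D μ.ord) ∈ D μ.ord :=
    csInf_mem (let ⟨δ, hδ, _⟩ := hP.2.1 0 (Ordinal.cof_pos.mp hκ.pos); ⟨δ, hδ⟩)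
  obtain ⟨ξ, hξκ, Y, hYP, hY⟩ := exists_subset_inter_Iic_mk_eq (hP.inter_Ioi (hP.1 hp₀)).2.1
    (hκcof ▸ Order.lt_succ lam)
  obtain ⟨γ, hγT, ⟨hγP, -⟩, hξγ⟩ := hT _ ((isClubIn_accPlus_inter_Iio hκ hP.2.1).inter_Ioi hξκ)
  obtain ⟨hγκ, hγcof, hγS⟩ := hTrefl γ hγT
  obtain ⟨hCγ, -, hcoh⟩ := hC γ hγκ (Ordinal.one_lt_cof_iff.mp (one_lt_aleph0.trans hγcof))
  obtain ⟨α, hαS, hξα, hαC, hαcof⟩ :=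
    exists_mem_acc_cofinalIn_acc_inter_accPlus hγcof hγS hCγ hγP hξγ
  have hCα : C α = C γ ∩ Iio α := hcoh α hαC
  have hαsmall := hsmall γ hγT α hαS (hCα ▸ inter_subset_left)
  obtain ⟨E, hE, hsub, hcofE⟩ := exists_isClubIn_dropSet_subset_of_antitone
    (Cardinal.isSuccLimit_ord hμ.aleph0_le) hD clubChain_antitone
    (fun i => clubChain_subset (Order.lt_succ i)) ((hCγ.1 hαC.1).trans hγκ)
    (hCα ▸ inter_subset_right)
    (by rwa [hμ.cof_ord]) (fun y hy => ⟨(hYP hy).1, (hYP hy).2.trans_lt hξα⟩)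
    (hY ▸ hαsmall.trans_le (Cardinal.lift_le.mpr hμlam)) (hCα ▸ hαcof)
  exact ⟨E, hE, α, hαS, hsub, hcofE⟩

theorem stmt4_general (lam : Cardinal) (hunc : Cardinal.aleph0 < lam)
    (C : Ordinal → Set Ordinal) (hC : IsSquareSeq lam C)
    (hotp : ∀ α < (Order.succ lam).ord, Order.IsSuccLimit α → α.cof < lam → otp (C α) < lam.ord)
    (S : Set Ordinal) (hS : S ⊆ {α | α < (Order.succ lam).ord ∧ α.cof = Cardinal.aleph0})
    (hrefl : IsStationaryIn
      {α | α < (Order.succ lam).ord ∧ Cardinal.aleph0 < α.cof ∧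
        IsStationaryIn (S ∩ Set.Iio α) α} (Order.succ lam).ord) :
    ∃ Dstar, IsClubIn Dstar (Order.succ lam).ord ∧
      ∀ D, IsClubIn D (Order.succ lam).ord →
        ∃ α ∈ S, dropSet C α Dstar ⊆ D ∧ CofinalIn (acc (dropSet C α Dstar)) α := by
  by_contra! hcon
  choose! f hf hfail using hcon
  obtain ⟨μ, hμ, hμlam, T, hT, hTstat, hsmall⟩ :=
    exists_isRegular_isStationaryIn_mk_lt hunc hC hotp hS hrefl fun γ hγ =>
      ⟨hγ.1, Ordinal.one_lt_cof_iff.mp (one_lt_aleph0.trans hγ.2.1)⟩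
  obtain ⟨E, hE, α, hαS, hsub, hcof⟩ :=
    exists_isClubIn_dropSet_subset hunc hC hμ hμlam hTstat hT hsmall hf
  exact hfail E hE α hαS hsub hcof

theorem stmt4 (lam : Cardinal) (hunc : Cardinal.aleph0 < lam)
    (C : Ordinal → Set Ordinal) (hC : IsSquareSeq lam C)
    (hotp : ∀ α < (Order.succ lam).ord, Order.IsSuccLimit α → α.cof < lam → otp (C α) < lam.ord)
    (S : Set Ordinal) (hS : S ⊆ {α | α < (Order.succ lam).ord ∧ α.cof = Cardinal.aleph0})
    (hSstat : IsStationaryIn S (Order.succ lam).ord)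
    (hrefl : IsStationaryIn
      {α | α < (Order.succ lam).ord ∧ Cardinal.aleph0 < α.cof ∧
        IsStationaryIn (S ∩ Set.Iio α) α} (Order.succ lam).ord) :
    ∃ Dstar, IsClubIn Dstar (Order.succ lam).ord ∧
      ∀ D, IsClubIn D (Order.succ lam).ord →
        ∃ α ∈ S, dropSet C α Dstar ⊆ D ∧ CofinalIn (acc (dropSet C α Dstar)) α :=
  stmt4_general lam hunc C hC hotp S hS hrefl

end
end

section
/- Let λ be an uncountable cardinal. If there exists a ⊠*_λ-sequence (a square-with-built-in-diamond sequence ⟨(C_α, S_α) : α < λ⁺⟩ where guessing occurs on a stationary set S' ⊆ S avoiding all accumulation points), then there exists a ⊠_λ(S)-sequence, i.e., the principle ⊠'_λ(S) implies ⊠_λ(S) for every stationary S ⊆ λ⁺. -/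
open Ordinal Set

noncomputable section

/-- The principle `⊠'_λ(S)`. -/
def BoxPrimeSeq (lam : Cardinal) (S : Set Ordinal) : Prop :=
  ∃ C Sd : Ordinal → Set Ordinal,
    (∀ α < (Order.succ lam).ord, Order.IsSuccLimit α →
      IsClubIn (C α) α ∧ otp (C α) ≤ lam.ord) ∧
    (∀ α < (Order.succ lam).ord, Order.IsSuccLimit α → ∀ β ∈ acc (C α),
      C β = C α ∩ Set.Iio β ∧ Sd β = Sd α ∩ Set.Iio β) ∧
    (∀ D, IsClubIn D (Order.succ lam).ord → ∀ A : Set Ordinal,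
      ∃ α ∈ S, C α ⊆ D ∧ Sd α = A ∩ Set.Iio α ∧ CofinalIn (acc (C α)) α)

/-- The principle `⊠_λ(S)`: guesses take place on a fixed `S' ⊆ S` avoiding all
accumulation points. -/
def BoxDiamondSeq (lam : Cardinal) (S : Set Ordinal) : Prop :=
  ∃ C Sd : Ordinal → Set Ordinal, ∃ S' ⊆ S,
    (∀ α < (Order.succ lam).ord, Order.IsSuccLimit α →
      IsClubIn (C α) α ∧ otp (C α) ≤ lam.ord) ∧
    (∀ α < (Order.succ lam).ord, Order.IsSuccLimit α → ∀ β ∈ acc (C α),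
      C β = C α ∩ Set.Iio β ∧ Sd β = Sd α ∩ Set.Iio β) ∧
    (∀ D, IsClubIn D (Order.succ lam).ord → ∀ A : Set Ordinal,
      ∃ α ∈ S', C α ⊆ D ∧ Sd α = A ∩ Set.Iio α ∧ CofinalIn (acc (C α)) α) ∧
    (∀ α < (Order.succ lam).ord, S' ∩ acc (C α) = ∅)

/-! Call `α` rich if `α ∈ S` and `acc (C α)` is cofinal in `α`, and minimally rich if no rich
point lies on `acc (C α)` below `α`. By coherence, of two minimally rich points on one
`acc (C β)` the smaller lies on the club of the larger, so each `acc (C β)` carries at most one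
of them. Cutting `C β` above that point keeps a club of no larger order type, preserves
coherence, and leaves no minimally rich point among its accumulation points. The least rich
point guessing `(D, A)` is minimally rich, because a rich point on its club would inherit the
guess by coherence; so the minimally rich points serve as `S'`. -/

universe u

section Enumeration

variable {C X Y : Set Ordinal.{u}} {i j b : Ordinal.{u}}

def enumBelow (C : Set Ordinal.{u}) (i : Ordinal.{u}) : Set Ordinal.{u} :=
  Set.range fun j : Set.Iio i => nth C j.1

lemma nth_eq_sInf : nth C i = sInf (C \ enumBelow C i) := by
  rw [nth]; rfl

lemma otp_eq_sInf : otp.{u, u} C = sInf {i | C ⊆ enumBelow C i} := rfl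

lemma enumBelow_mono (h : i ≤ j) : enumBelow C i ⊆ enumBelow C j := by
  rintro _ ⟨⟨k, hk⟩, rfl⟩
  exact ⟨⟨k, lt_of_lt_of_le hk h⟩, rfl⟩

lemma diff_enumBelow_anti (h : i ≤ j) : C \ enumBelow C j ⊆ C \ enumBelow C i :=
  fun _ hx => ⟨hx.1, fun hm => hx.2 (enumBelow_mono h hm)⟩

lemma nth_mem_diff_enumBelow (h : (C \ enumBelow C i).Nonempty) :
    nth C i ∈ C \ enumBelow C i := by
  rw [nth_eq_sInf]; exact csInf_mem h

lemma nth_lt_nth (hji : j < i) (h : (C \ enumBelow C i).Nonempty) : nth C j < nth C i := by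
  have hi := nth_mem_diff_enumBelow h
  have hle : nth C j ≤ nth C i := by
    rw [nth_eq_sInf (i := j)]
    exact csInf_le (OrderBot.bddBelow _) (diff_enumBelow_anti hji.le hi)
  exact hle.lt_of_ne fun heq => hi.2 ⟨⟨j, hji⟩, heq⟩

lemma le_nth (h : (C \ enumBelow C i).Nonempty) : i ≤ nth C i := by
  induction i using WellFoundedLT.induction with
  | _ i ih =>
    by_contra! hlt
    exact (nth_lt_nth hlt h).not_ge (ih _ hlt (h.mono (diff_enumBelow_anti hlt.le)))

lemma subset_enumBelow (hC : C ⊆ Set.Iio b) : C ⊆ enumBelow C b := by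
  by_contra hsub
  obtain ⟨x, hx⟩ := Set.not_subset.mp hsub
  have hne : (C \ enumBelow C b).Nonempty := ⟨x, hx⟩
  exact (le_nth hne).not_gt (hC (nth_mem_diff_enumBelow hne).1)

lemma nth_mem_diff_enumBelow_of_subset (hXY : X ⊆ Y) (h : (X \ enumBelow X i).Nonempty) :
    nth X i ∈ Y \ enumBelow Y i := by
  induction i using WellFoundedLT.induction with
  | _ i ih =>
    have hi := nth_mem_diff_enumBelow h
    refine ⟨hXY hi.1, ?_⟩
    rintro ⟨⟨j, hji⟩, hj⟩
    have hj_mem := ih j hji (h.mono (diff_enumBelow_anti hji.le))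
    have hYX : nth Y j ≤ nth X j := by
      rw [nth_eq_sInf (C := Y)]; exact csInf_le (OrderBot.bddBelow _) hj_mem
    exact (nth_lt_nth hji h).not_ge (hj ▸ hYX)

lemma otp_mono (hXY : X ⊆ Y) (hY : Y ⊆ Set.Iio b) : otp.{u, u} X ≤ otp.{u, u} Y := by
  have hY_enum : Y ⊆ enumBelow Y (otp Y) := by
    rw [otp_eq_sInf]
    exact csInf_mem (⟨b, subset_enumBelow hY⟩ : {i | Y ⊆ enumBelow Y i}.Nonempty)
  have hX_enum : X ⊆ enumBelow X (otp Y) := by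
    by_contra hsub
    obtain ⟨x, hx⟩ := Set.not_subset.mp hsub
    exact (nth_mem_diff_enumBelow_of_subset hXY ⟨x, hx⟩).2
      (hY_enum (nth_mem_diff_enumBelow_of_subset hXY ⟨x, hx⟩).1)
  rw [otp_eq_sInf (C := X)]
  exact csInf_le (OrderBot.bddBelow _) hX_enum

end Enumeration

section ClubSets

variable {X Y C : Set Ordinal.{u}} {α β γ : Ordinal.{u}}

lemma CofinalIn.isSuccPrelimit (h : CofinalIn X α) : Order.IsSuccPrelimit α := by
  intro c hc
  obtain ⟨δ, -, hcδ, hδα⟩ := h c hc.lt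
  exact hc.2 hcδ hδα

lemma acc_mono (h : X ⊆ Y) : acc X ⊆ acc Y := fun _ ⟨hx, hcof⟩ =>
  ⟨h hx, fun γ hγ => let ⟨δ, hδ, h₁, h₂⟩ := hcof γ hγ; ⟨δ, h hδ, h₁, h₂⟩⟩

lemma accPlus_mono_s5 (h : X ⊆ Y) : accPlus X ⊆ accPlus Y := fun _ ⟨⟨δ, hδ, hδx⟩, hcof⟩ =>
  ⟨⟨δ, h hδ, hδx⟩, fun γ hγ => let ⟨ε, hε, h₁, h₂⟩ := hcof γ hγ; ⟨ε, h hε, h₁, h₂⟩⟩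

lemma acc_inter_Iio : acc (X ∩ Set.Iio β) = acc X ∩ Set.Iio β := by
  ext x
  constructor
  · rintro ⟨⟨hxX, hxβ⟩, hcof⟩
    refine ⟨⟨hxX, fun γ hγ => ?_⟩, hxβ⟩
    obtain ⟨δ, hδ, h₁, h₂⟩ := hcof γ hγ
    exact ⟨δ, hδ.1, h₁, h₂⟩
  · rintro ⟨⟨hxX, hcof⟩, hxβ⟩
    refine ⟨⟨hxX, hxβ⟩, fun γ hγ => ?_⟩
    obtain ⟨δ, hδ, h₁, h₂⟩ := hcof γ hγ
    exact ⟨δ, ⟨hδ, h₂.trans hxβ⟩, h₁, h₂⟩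

lemma IsClubIn.inter_strictUpperBounds (hC : IsClubIn C α) (hγ : γ < α)
    (hX : ∀ x ∈ X, x ≤ γ) : IsClubIn (C ∩ {δ | ∀ x ∈ X, x < δ}) α := by
  refine ⟨fun x hx => hC.1 hx.1, fun g hg => ?_, fun b hb hbacc => ⟨?_, fun x hx => ?_⟩⟩
  · obtain ⟨δ, hδC, hδ₁, hδ₂⟩ := hC.2.1 (max g γ) (max_lt hg hγ)
    exact ⟨δ, ⟨hδC, fun x hx => (hX x hx).trans_lt (le_max_right g γ |>.trans_lt hδ₁)⟩,
      (le_max_left g γ).trans_lt hδ₁, hδ₂⟩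
  · exact hC.2.2 b hb (accPlus_mono_s5 Set.inter_subset_left hbacc)
  · obtain ⟨δ, hδ, hδb⟩ := hbacc.1
    exact (hδ.2 x hx).trans hδb

end ClubSets

section Pruning

variable (S : Set Ordinal.{u}) (C : Ordinal.{u} → Set Ordinal.{u})

def IsRichPoint (α : Ordinal.{u}) : Prop :=
  α ∈ S ∧ CofinalIn (acc (C α)) α

def minimalRichPoints : Set Ordinal.{u} :=
  {α | IsRichPoint S C α ∧ ∀ β ∈ acc (C α), β < α → ¬IsRichPoint S C β}

def prune (α : Ordinal.{u}) : Set Ordinal.{u} :=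
  C α ∩ {δ | ∀ x ∈ minimalRichPoints S C ∩ acc (C α), x < δ}

variable {S C} {α β : Ordinal.{u}}

lemma minimalRichPoints_inter_acc_subsingleton
    (hcoh : ∀ β ∈ acc (C α), C β = C α ∩ Set.Iio β) :
    (minimalRichPoints S C ∩ acc (C α)).Subsingleton := by
  suffices ∀ a ∈ minimalRichPoints S C ∩ acc (C α),
      ∀ b ∈ minimalRichPoints S C ∩ acc (C α), ¬a < b from
    fun a ha b hb => le_antisymm (not_lt.mp (this b hb a ha)) (not_lt.mp (this a ha b hb))
  intro a ha b hb hab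
  have hab_acc : a ∈ acc (C b) := by
    rw [hcoh b hb.2, acc_inter_Iio]
    exact ⟨ha.2, hab⟩
  exact hb.1.2 a hab_acc hab ha.1.1

lemma isClubIn_prune (hC : IsClubIn (C α) α) (hα : α ≠ 0)
    (hcoh : ∀ β ∈ acc (C α), C β = C α ∩ Set.Iio β) : IsClubIn (prune S C α) α := by
  obtain ⟨γ, hγα, hγ⟩ : ∃ γ < α, ∀ x ∈ minimalRichPoints S C ∩ acc (C α), x ≤ γ := by
    rcases (minimalRichPoints S C ∩ acc (C α)).eq_empty_or_nonempty with hempty | ⟨a, ha⟩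
    · exact ⟨0, pos_iff_ne_zero.mpr hα, by simp [hempty]⟩
    · exact ⟨a, hC.1 ha.2.1,
        fun x hx => (minimalRichPoints_inter_acc_subsingleton hcoh hx ha).le⟩
  exact hC.inter_strictUpperBounds hγα hγ

lemma prune_inter_Iio (hcoh : ∀ β ∈ acc (C α), C β = C α ∩ Set.Iio β)
    (hβ : β ∈ acc (prune S C α)) : prune S C β = prune S C α ∩ Set.Iio β := by
  have hbound : ∀ x ∈ minimalRichPoints S C ∩ acc (C α), x < β := hβ.1.2
  ext δ
  simp only [prune, hcoh β (acc_mono Set.inter_subset_left hβ), acc_inter_Iio,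
    Set.mem_inter_iff, Set.mem_ofPred_eq, Set.mem_Iio]
  constructor
  · rintro ⟨⟨hδC, hδβ⟩, hδ⟩
    exact ⟨⟨hδC, fun x hx => hδ x ⟨hx.1, hx.2, hbound x hx⟩⟩, hδβ⟩
  · rintro ⟨⟨hδC, hδ⟩, hδβ⟩
    exact ⟨⟨hδC, hδβ⟩, fun x hx => hδ x ⟨hx.1, hx.2.1⟩⟩

lemma minimalRichPoints_inter_acc_prune : minimalRichPoints S C ∩ acc (prune S C α) = ∅ :=
  Set.eq_empty_iff_forall_notMem.mpr fun x ⟨hx, hx_acc⟩ =>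
    lt_irrefl x (hx_acc.1.2 x ⟨hx, acc_mono Set.inter_subset_left hx_acc⟩)

lemma prune_eq_self (hα : α ∈ minimalRichPoints S C) (hC : C α ⊆ Set.Iio α) :
    prune S C α = C α :=
  Set.inter_eq_left.mpr fun _ _ x hx => (hα.2 x hx.2 (hC hx.2.1) hx.1.1).elim

lemma cofinalIn_acc_prune (hα : α ∈ minimalRichPoints S C)
    (hC : Order.IsSuccLimit α → C α ⊆ Set.Iio α) : CofinalIn (acc (prune S C α)) α := by
  rcases eq_or_ne α 0 with rfl | hα0
  · exact fun γ hγ => (hγ.not_ge (zero_le (a := γ))).elim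
  · rw [prune_eq_self hα (hC (Ordinal.isSuccLimit_iff.mpr ⟨hα0, hα.1.2.isSuccPrelimit⟩))]
    exact hα.1.2

lemma exists_mem_minimalRichPoints {P : Ordinal.{u} → Prop}
    (hP : ∀ α ∈ S, Order.IsSuccLimit α → P α → ∀ β ∈ acc (C α), β < α → P β)
    (h : ∃ α, IsRichPoint S C α ∧ P α) : ∃ α ∈ minimalRichPoints S C, P α := by
  obtain ⟨α, ⟨hrich, hPα⟩, hmin⟩ :=
    wellFounded_lt.has_min {α | IsRichPoint S C α ∧ P α} h
  refine ⟨α, ⟨hrich, fun β hβ hβα hβ_rich => hmin β ⟨hβ_rich, ?_⟩ hβα⟩, hPα⟩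
  have hlim : Order.IsSuccLimit α :=
    Ordinal.isSuccLimit_iff.mpr ⟨((zero_le (a := β)).trans_lt hβα).ne', hrich.2.isSuccPrelimit⟩
  exact hP α hrich.1 hlim hPα β hβ hβα

end Pruning

theorem stmt5_general (lam : Cardinal) :
    ∀ S ⊆ Set.Iio (Order.succ lam).ord, IsStationaryIn S (Order.succ lam).ord →
      BoxPrimeSeq lam S → BoxDiamondSeq lam S := by
  rintro S hS - ⟨C, Sd, hclub, hcoh, hguess⟩
  refine ⟨prune S C, Sd, minimalRichPoints S C, fun α hα => hα.1.1,
    fun α hα hlim => ?_, fun α hα hlim β hβ => ?_, fun D hD A => ?_,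
    fun _ _ => minimalRichPoints_inter_acc_prune⟩
  · obtain ⟨hC, hotp⟩ := hclub α hα hlim
    exact ⟨isClubIn_prune hC hlim.ne_bot fun β hβ => (hcoh α hα hlim β hβ).1,
      (otp_mono Set.inter_subset_left hC.1).trans hotp⟩
  · exact ⟨prune_inter_Iio (fun β hβ => (hcoh α hα hlim β hβ).1) hβ,
      (hcoh α hα hlim β (acc_mono Set.inter_subset_left hβ)).2⟩
  · obtain ⟨α, hα, hCD, hSd⟩ :=
      exists_mem_minimalRichPoints (P := fun α => C α ⊆ D ∧ Sd α = A ∩ Set.Iio α)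
        (fun α hαS hlim ⟨hCD, hSd⟩ β hβ hβα => by
          obtain ⟨hCβ, hSdβ⟩ := hcoh α (hS hαS) hlim β hβ
          refine ⟨hCβ ▸ Set.inter_subset_left.trans hCD, ?_⟩
          rw [hSdβ, hSd, Set.inter_assoc, Set.Iio_inter_Iio, min_eq_right hβα.le])
        (let ⟨α, hαS, hCD, hSd, hcof⟩ := hguess D hD A; ⟨α, ⟨hαS, hcof⟩, hCD, hSd⟩)
    exact ⟨α, hα, Set.inter_subset_left.trans hCD, hSd,
      cofinalIn_acc_prune hα fun hlim => (hclub α (hS hα.1.1) hlim).1.1⟩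

theorem stmt5 (lam : Cardinal) (hunc : Cardinal.aleph0 < lam) :
    ∀ S ⊆ Set.Iio (Order.succ lam).ord, IsStationaryIn S (Order.succ lam).ord →
      BoxPrimeSeq lam S → BoxDiamondSeq lam S :=
  stmt5_general lam

end
end

section
/- Let λ be an uncountable cardinal and suppose ⟨(C_α, S_α) : α < λ⁺⟩ is a ⊠^Γ_λ-sequence for some Γ ⊆ λ⁺ such that Γ \ θ ≠ ∅ for all θ < λ. Then the very same sequence witnesses ⊠^{Reg(λ)}_λ: for every club D ⊆ λ⁺, every cofinal A ⊆ λ⁺, and every regular θ < λ, there exists β < λ⁺ with cf(β) = θ, C_β ⊆ D, S_β = A ∩ β, and sup(acc(C_β)) = β. -/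
/-!
If `cf α = θ` the ordinal `α` supplied by the guessing property already works. Otherwise
`θ < cf α`, and as `acc (C α)` is cofinal in `α` we can pick a strictly increasing `θ`-sequence
of its points below `α`. Its supremum `β` has cofinality `θ` and is a limit of `acc (C α)`, so
`β ∈ acc (C α)` by closure of `C α`; coherence then gives `C β = C α ∩ β ⊆ D`,
`S β = S α ∩ β = A ∩ β`, and `acc (C β) = acc (C α) ∩ β` is cofinal in `β`.
-/

open Ordinal Set

noncomputable section

theorem iSup_Iio_lt_of_card_lt_cof {o α : Ordinal} {f : Ordinal → Ordinal}
    (ho : o.card < α.cof) (hf : ∀ i < o, f i < α) : ⨆ i : Iio o, f i < α := by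
  refine Ordinal.lift_iSup_lt_of_lt_cof (f := fun i : Iio o => f i) ?_ fun i => hf i i.2
  simpa [Cardinal.mk_Iio_ordinal, ← Ordinal.lift_cof, ← Ordinal.lift_card] using ho

theorem exists_strictMono_mem_lt_of_cofinalIn {E : Set Ordinal} {α o : Ordinal}
    (hE : CofinalIn E α) (ho : o ≤ α.cof.ord) :
    ∃ f : Ordinal → Ordinal, StrictMono f ∧ ∀ i < o, f i ∈ E ∧ f i < α := by
  -- padding `E` with `[α, ∞)` makes it unbounded, so that `enumOrd` enumerates it
  have hunb : ¬ BddAbove (E ∪ Ici α) := fun h => not_bddAbove_Ici α (h.mono subset_union_right)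
  set f := enumOrd (E ∪ Ici α)
  have hlt : ∀ i < o, f i < α := by
    intro i
    induction i using WellFoundedLT.induction with | _ i IH => ?_
    intro hi
    have hsup : ⨆ j : Iio i, f j < α :=
      iSup_Iio_lt_of_card_lt_cof (Cardinal.lt_ord.1 (hi.trans_le ho))
        fun j hj => IH j hj (hj.trans hi)
    obtain ⟨δ, hδE, hδ, hδα⟩ := hE _ hsup
    refine (enumOrd_le_of_forall_lt (Or.inl hδE) fun j hj => ?_).trans_lt hδα
    exact (Ordinal.le_iSup (fun j : Iio i => f j) ⟨j, hj⟩).trans_lt hδ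
  exact ⟨f, enumOrd_strictMono hunb, fun i hi =>
    ⟨(enumOrd_mem hunb i).resolve_right (not_le.2 (hlt i hi)), hlt i hi⟩⟩

theorem exists_cof_eq_cofinalIn {E : Set Ordinal} {α : Ordinal} {θ : Cardinal}
    (hE : CofinalIn E α) (hθ : θ.IsRegular) (hθα : θ < α.cof) :
    ∃ β < α, β.cof = θ ∧ CofinalIn E β := by
  obtain ⟨f, hf, hfE⟩ := exists_strictMono_mem_lt_of_cofinalIn hE (Cardinal.ord_le_ord.2 hθα.le)
  have hθlim := Cardinal.isSuccLimit_ord hθ.aleph0_le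
  have hg : StrictMono fun i : Iio θ.ord => f i := hf.comp (Subtype.strictMono_coe _)
  have hf_lt : ∀ i < θ.ord, f i < ⨆ j : Iio θ.ord, f j := fun i hi =>
    (hf (Order.lt_succ i)).trans_le
      (Ordinal.le_iSup (fun j : Iio θ.ord => f j) ⟨_, hθlim.succ_lt hi⟩)
  refine ⟨_, iSup_Iio_lt_of_card_lt_cof (by rwa [Cardinal.card_ord]) fun i hi => (hfE i hi).2,
    by rw [Ordinal.cof_iSup_Iio hg hθlim.isSuccPrelimit, hθ.cof_ord], fun γ hγ => ?_⟩
  obtain ⟨i, hi⟩ := Ordinal.lt_iSup_iff.1 hγ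
  exact ⟨f i, (hfE i i.2).1, hi, hf_lt i i.2⟩

theorem CofinalIn.mono {X Y : Set Ordinal} {α : Ordinal} (h : CofinalIn X α) (hXY : X ⊆ Y) :
    CofinalIn Y α := fun γ hγ =>
  let ⟨δ, hδ, hγδ, hδα⟩ := h γ hγ
  ⟨δ, hXY hδ, hγδ, hδα⟩

theorem CofinalIn.inter_Iio {X : Set Ordinal} {α : Ordinal} (h : CofinalIn X α) :
    CofinalIn (X ∩ Iio α) α := fun γ hγ =>
  let ⟨δ, hδ, hγδ, hδα⟩ := h γ hγ
  ⟨δ, ⟨hδ, hδα⟩, hγδ, hδα⟩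

theorem acc_subset (C : Set Ordinal) : acc C ⊆ C := fun _ h => h.1

theorem acc_inter_Iio_s14 (C : Set Ordinal) (β : Ordinal) : acc (C ∩ Iio β) = acc C ∩ Iio β := by
  ext δ
  refine ⟨fun ⟨⟨hδC, hδβ⟩, hlim⟩ => ⟨⟨hδC, fun γ hγ => ?_⟩, hδβ⟩,
    fun ⟨⟨hδC, hlim⟩, hδβ⟩ => ⟨⟨hδC, hδβ⟩, fun γ hγ => ?_⟩⟩
  · obtain ⟨ε, hε, hγε, hεδ⟩ := hlim γ hγ
    exact ⟨ε, hε.1, hγε, hεδ⟩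
  · obtain ⟨ε, hε, hγε, hεδ⟩ := hlim γ hγ
    exact ⟨ε, ⟨hε, hεδ.trans hδβ⟩, hγε, hεδ⟩

theorem IsClubIn.mem_acc {C : Set Ordinal} {α β : Ordinal} (hC : IsClubIn C α) (hβα : β < α)
    (hβ : 0 < β) (hCβ : CofinalIn C β) : β ∈ acc C := by
  obtain ⟨δ, hδ, -, hδβ⟩ := hCβ 0 hβ
  exact ⟨hC.2.2 β hβα ⟨⟨δ, hδ, hδβ⟩, hCβ⟩, hCβ⟩

theorem IsSquareSeq.exists_lt_cof_eq {lam : Cardinal} {C S : Ordinal → Set Ordinal}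
    (hsq : IsSquareSeq lam C)
    (hcoh : ∀ α < (Order.succ lam).ord, Order.IsSuccLimit α → ∀ β ∈ acc (C α),
      S β = S α ∩ Set.Iio β)
    {α : Ordinal} (hα : α < (Order.succ lam).ord) (hαlim : Order.IsSuccLimit α)
    (hacc : CofinalIn (acc (C α)) α) {θ : Cardinal} (hθ : θ.IsRegular) (hθα : θ < α.cof) :
    ∃ β < α, β.cof = θ ∧ C β ⊆ C α ∧ S β = S α ∩ Iio β ∧ CofinalIn (acc (C β)) β := by
  obtain ⟨β, hβα, hcof, hβacc⟩ := exists_cof_eq_cofinalIn hacc hθ hθα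
  obtain ⟨hclub, -, hcoherent⟩ := hsq α hα hαlim
  have hβ0 : 0 < β := pos_iff_ne_zero.2 (Ordinal.cof_eq_zero.not.1 (hcof ▸ hθ.pos.ne'))
  have hβ : β ∈ acc (C α) := hclub.mem_acc hβα hβ0 (hβacc.mono (acc_subset _))
  have hCβ := hcoherent β hβ
  refine ⟨β, hβα, hcof, hCβ ▸ inter_subset_left, hcoh α hα hαlim β hβ, ?_⟩
  rw [hCβ, acc_inter_Iio_s14]
  exact hβacc.inter_Iio

theorem stmt14_general (lam : Cardinal) (Γ : Set Ordinal)
    (hΓ : ∀ θ < lam.ord, ∃ ξ ∈ Γ, θ ≤ ξ ∧ ξ ≠ 0 ∧ Order.IsSuccLimit ξ)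
    (C S : Ordinal → Set Ordinal) (hsq : IsSquareSeq lam C)
    (hcoh : ∀ α < (Order.succ lam).ord, Order.IsSuccLimit α → ∀ β ∈ acc (C α),
      S β = S α ∩ Set.Iio β)
    (hguess : ∀ D, IsClubIn D (Order.succ lam).ord → ∀ A : Set Ordinal,
      ∀ θ ∈ Γ, θ ≠ 0 → Order.IsSuccLimit θ →
        ∃ α < (Order.succ lam).ord, C α ⊆ D ∧ S α = A ∩ Set.Iio α ∧
          (α.cof).ord = θ ∧ CofinalIn (acc (C α)) α) :
    ∀ D, IsClubIn D (Order.succ lam).ord →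
      ∀ A : Set Ordinal, CofinalIn A (Order.succ lam).ord →
        ∀ θ : Cardinal, θ.IsRegular → θ < lam →
          ∃ β < (Order.succ lam).ord, β.cof = θ ∧ C β ⊆ D ∧
            S β = A ∩ Set.Iio β ∧ CofinalIn (acc (C β)) β := by
  intro D hD A _ θ hθ hθlam
  obtain ⟨ξ, hξΓ, hθξ, hξ0, hξlim⟩ := hΓ θ.ord (Cardinal.ord_lt_ord.2 hθlam)
  obtain ⟨α, hα, hCD, hSA, hcof, hacc⟩ := hguess D hD A ξ hξΓ hξ0 hξlim
  have hαlim : Order.IsSuccLimit α := by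
    rw [← one_lt_cof_iff, ← aleph0_le_cof_iff, ← Cardinal.ord_le_ord, Cardinal.ord_aleph0, hcof]
    exact Ordinal.omega0_le_of_isSuccLimit hξlim
  rcases hθξ.eq_or_lt with hθξ | hθξ
  · exact ⟨α, hα, Cardinal.ord_injective (hcof.trans hθξ.symm), hCD, hSA, hacc⟩
  obtain ⟨β, hβα, hcofβ, hCβ, hSβ, haccβ⟩ :=
    hsq.exists_lt_cof_eq hcoh hα hαlim hacc hθ (by rwa [← Cardinal.ord_lt_ord, hcof])
  refine ⟨β, hβα.trans hα, hcofβ, hCβ.trans hCD, ?_, haccβ⟩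
  rw [hSβ, hSA, inter_assoc, Iio_inter_Iio, min_eq_right hβα.le]

theorem stmt14 (lam : Cardinal) (hunc : Cardinal.aleph0 < lam)
    (Γ : Set Ordinal) (hΓsub : Γ ⊆ Set.Iio (Order.succ lam).ord)
    (hΓ : ∀ θ < lam.ord, ∃ ξ ∈ Γ, θ ≤ ξ ∧ ξ ≠ 0 ∧ Order.IsSuccLimit ξ)
    (C S : Ordinal → Set Ordinal) (hsq : IsSquareSeq lam C)
    (hcoh : ∀ α < (Order.succ lam).ord, Order.IsSuccLimit α → ∀ β ∈ acc (C α),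
      S β = S α ∩ Set.Iio β)
    (hguess : ∀ D, IsClubIn D (Order.succ lam).ord → ∀ A : Set Ordinal,
      ∀ θ ∈ Γ, θ ≠ 0 → Order.IsSuccLimit θ →
        ∃ α < (Order.succ lam).ord, C α ⊆ D ∧ S α = A ∩ Set.Iio α ∧
          (α.cof).ord = θ ∧ CofinalIn (acc (C α)) α) :
    ∀ D, IsClubIn D (Order.succ lam).ord →
      ∀ A : Set Ordinal, CofinalIn A (Order.succ lam).ord →
        ∀ θ : Cardinal, θ.IsRegular → θ < lam →
          ∃ β < (Order.succ lam).ord, β.cof = θ ∧ C β ⊆ D ∧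
            S β = A ∩ Set.Iio β ∧ CofinalIn (acc (C β)) β :=
  stmt14_general lam Γ hΓ C S hsq hcoh hguess
end
end
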